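/- arXiv:1712.07560 — 2 statements merged into one kernel-verified Lean document; each statement's English description precedes it below -/
import Mathlib

section
/- A pure state |Ψ⟩ of n fermionic modes (in Jordan-Wigner representation, an n-qubit state of definite parity) is Gaussian, i.e., [Λ, (|Ψ⟩⟨Ψ|)^{⊗2}] = 0 where Λ = Σ_{i=1}^{2n} c_i ⊗ c_i, if and only if Λ(|Ψ⟩ ⊗ |Ψ⟩) = 0. -/
open Matrix Kronecker

/-- Pauli X. -/
noncomputable def pauliX : Matrix (Fin 2) (Fin 2) ℂ := !![0, 1; 1, 0]
/-- Pauli Y. -/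
noncomputable def pauliY : Matrix (Fin 2) (Fin 2) ℂ := !![0, -Complex.I; Complex.I, 0]
/-- Pauli Z. -/
noncomputable def pauliZ : Matrix (Fin 2) (Fin 2) ℂ := !![1, 0; 0, -1]

/-- The n-fold tensor (Kronecker) product `M 0 ⊗ ⋯ ⊗ M (n-1)` of 2×2 matrices,
realized as a matrix indexed by `Fin n → Fin 2` with entries given by products of
entries of the factors. -/
noncomputable def tensorFactors (n : ℕ) (M : Fin n → Matrix (Fin 2) (Fin 2) ℂ) :
    Matrix (Fin n → Fin 2) (Fin n → Fin 2) ℂ :=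
  Matrix.of fun x y => ∏ i, M i (x i) (y i)

/-- The parity operator `Z^{⊗n}`. -/
noncomputable def parityOp (n : ℕ) : Matrix (Fin n → Fin 2) (Fin n → Fin 2) ℂ :=
  tensorFactors n (fun _ => pauliZ)

/-- The Jordan-Wigner Majorana operators on `n` qubits (0-indexed):
`c_{2j} = Z^{⊗j} ⊗ X ⊗ 1^{⊗(n-j-1)}` and `c_{2j+1} = Z^{⊗j} ⊗ Y ⊗ 1^{⊗(n-j-1)}`. -/
noncomputable def majorana (n : ℕ) (k : Fin (2 * n)) :
    Matrix (Fin n → Fin 2) (Fin n → Fin 2) ℂ :=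
  tensorFactors n (fun i =>
    if (i : ℕ) < (k : ℕ) / 2 then pauliZ
    else if (i : ℕ) = (k : ℕ) / 2 then (if (k : ℕ) % 2 = 0 then pauliX else pauliY)
    else 1)

/-- The operator `Λ = Σ_{i=1}^{2n} c_i ⊗ c_i` on the doubled space. -/
noncomputable def lambdaOp (n : ℕ) :
    Matrix ((Fin n → Fin 2) × (Fin n → Fin 2)) ((Fin n → Fin 2) × (Fin n → Fin 2)) ℂ :=
  ∑ i : Fin (2 * n), (majorana n i) ⊗ₖ (majorana n i)

lemma tf_mul (n : ℕ) (M N : Fin n → Matrix (Fin 2) (Fin 2) ℂ) :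
    tensorFactors n M * tensorFactors n N = tensorFactors n (fun i => M i * N i) := by
  ext x y
  simp only [tensorFactors, Matrix.mul_apply, Matrix.of_apply]
  rw [Finset.prod_univ_sum (fun _ => (Finset.univ : Finset (Fin 2)))
    (fun i j => M i (x i) j * N i j (y i))]
  rw [Fintype.piFinset_univ]
  exact Finset.sum_congr rfl fun f _ => (Finset.prod_mul_distrib).symm

lemma tf_conjTranspose (n : ℕ) (M : Fin n → Matrix (Fin 2) (Fin 2) ℂ) :
    (tensorFactors n M)ᴴ = tensorFactors n (fun i => (M i)ᴴ) := by
  ext x y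
  simp [tensorFactors, Matrix.conjTranspose_apply]

lemma tf_neg_at (n : ℕ) (M N : Fin n → Matrix (Fin 2) (Fin 2) ℂ) (j : Fin n)
    (hj : M j = -N j) (h : ∀ i, i ≠ j → M i = N i) :
    tensorFactors n M = - tensorFactors n N := by
  ext x y
  simp only [tensorFactors, Matrix.of_apply, Matrix.neg_apply]
  rw [← Finset.prod_erase_mul _ _ (Finset.mem_univ j),
      ← Finset.prod_erase_mul _ (fun i => N i (x i) (y i)) (Finset.mem_univ j)]
  rw [Finset.prod_congr rfl (fun i hi => by rw [h i (Finset.ne_of_mem_erase hi)]), hj]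
  simp [Matrix.neg_apply]

lemma pauliX_herm : pauliXᴴ = pauliX := by
  ext i j; fin_cases i <;> fin_cases j <;> simp [pauliX, Matrix.conjTranspose_apply]

lemma pauliY_herm : pauliYᴴ = pauliY := by
  ext i j; fin_cases i <;> fin_cases j <;> simp [pauliY, Matrix.conjTranspose_apply]

lemma pauliZ_herm : pauliZᴴ = pauliZ := by
  ext i j; fin_cases i <;> fin_cases j <;> simp [pauliZ, Matrix.conjTranspose_apply]

lemma XZ_anti : pauliX * pauliZ = -(pauliZ * pauliX) := by
  ext i j; fin_cases i <;> fin_cases j <;>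
    simp [pauliX, pauliZ, Matrix.mul_apply, Fin.sum_univ_two]

lemma YZ_anti : pauliY * pauliZ = -(pauliZ * pauliY) := by
  ext i j; fin_cases i <;> fin_cases j <;>
    simp [pauliY, pauliZ, Matrix.mul_apply, Fin.sum_univ_two]

lemma parity_herm (n : ℕ) : (parityOp n)ᴴ = parityOp n := by
  rw [parityOp, tf_conjTranspose]; simp [pauliZ_herm]

lemma majorana_herm (n : ℕ) (k : Fin (2 * n)) : (majorana n k)ᴴ = majorana n k := by
  rw [majorana, tf_conjTranspose]
  have : (fun i : Fin n => (if (i : ℕ) < (k : ℕ) / 2 then pauliZ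
      else if (i : ℕ) = (k : ℕ) / 2 then (if (k : ℕ) % 2 = 0 then pauliX else pauliY) else 1)ᴴ)
      = fun i : Fin n => if (i : ℕ) < (k : ℕ) / 2 then pauliZ
      else if (i : ℕ) = (k : ℕ) / 2 then (if (k : ℕ) % 2 = 0 then pauliX else pauliY) else 1 := by
    funext i
    split_ifs <;>
      simp [pauliX_herm, pauliY_herm, pauliZ_herm, Matrix.conjTranspose_one]
  rw [this]

lemma majorana_anticomm (n : ℕ) (k : Fin (2 * n)) :
    majorana n k * parityOp n = -(parityOp n * majorana n k) := by
  have hk : (k : ℕ) / 2 < n := by omega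
  rw [majorana, parityOp, tf_mul, tf_mul]
  refine tf_neg_at n _ _ ⟨(k : ℕ) / 2, hk⟩ ?_ ?_
  · simp only [lt_irrefl, if_false, if_true, eq_self_iff_true]
    split_ifs
    · exact XZ_anti
    · exact YZ_anti
  · intro i hi
    have hi' : (i : ℕ) ≠ (k : ℕ) / 2 := fun h => hi (Fin.ext h)
    rw [if_neg hi']
    by_cases h : (i : ℕ) < (k : ℕ) / 2
    · rw [if_pos h]
    · rw [if_neg h, one_mul, mul_one]

lemma expect_zero (n : ℕ) (ψ : (Fin n → Fin 2) → ℂ)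
    (hpar : (parityOp n).mulVec ψ = ψ ∨ (parityOp n).mulVec ψ = -ψ) (k : Fin (2 * n)) :
    star ψ ⬝ᵥ (majorana n k).mulVec ψ = 0 := by
  set C := majorana n k
  set P := parityOp n
  have key : ∀ w, star ψ ⬝ᵥ P.mulVec w = star (P.mulVec ψ) ⬝ᵥ w := by
    intro w
    rw [Matrix.star_mulVec, ← Matrix.dotProduct_mulVec, parity_herm]
  have main : star ψ ⬝ᵥ C.mulVec (P.mulVec ψ) = -(star (P.mulVec ψ) ⬝ᵥ C.mulVec ψ) := by
    rw [Matrix.mulVec_mulVec, majorana_anticomm, Matrix.neg_mulVec, dotProduct_neg,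
      ← Matrix.mulVec_mulVec, key]
  rcases hpar with h | h
  · rw [h] at main
    exact CharZero.eq_neg_self_iff.mp main
  · rw [h, Matrix.mulVec_neg, dotProduct_neg, star_neg, neg_dotProduct,
      neg_neg, neg_eq_iff_eq_neg] at main
    exact CharZero.eq_neg_self_iff.mp main

lemma kron_conjT {m : Type*} [Fintype m] [DecidableEq m] (A B : Matrix m m ℂ) :
    (A ⊗ₖ B)ᴴ = Aᴴ ⊗ₖ Bᴴ := by
  ext ⟨a, b⟩ ⟨c, d⟩
  simp [Matrix.conjTranspose_apply, Matrix.kroneckerMap_apply]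

lemma lambda_herm (n : ℕ) : (lambdaOp n)ᴴ = lambdaOp n := by
  rw [lambdaOp, Matrix.conjTranspose_sum]
  exact Finset.sum_congr rfl fun k _ => by rw [kron_conjT, majorana_herm]

lemma dot_split {m : Type*} [Fintype m] (f g a b : m → ℂ) :
    (fun p : m × m => f p.1 * g p.2) ⬝ᵥ (fun p : m × m => a p.1 * b p.2)
      = (f ⬝ᵥ a) * (g ⬝ᵥ b) := by
  simp only [dotProduct]
  rw [Fintype.sum_prod_type, Finset.sum_mul_sum]
  exact Finset.sum_congr rfl fun c _ => Finset.sum_congr rfl fun d _ => by ring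

lemma kron_mulVec_prod {m : Type*} [Fintype m] (A B : Matrix m m ℂ) (f g : m → ℂ) :
    (A ⊗ₖ B).mulVec (fun p => f p.1 * g p.2)
      = fun p => (A.mulVec f) p.1 * (B.mulVec g) p.2 := by
  funext p
  simp only [Matrix.mulVec, dotProduct, Matrix.kroneckerMap_apply]
  rw [Fintype.sum_prod_type, Finset.sum_mul_sum]
  exact Finset.sum_congr rfl fun c _ => Finset.sum_congr rfl fun d _ => by ring

lemma sum_mulVec' {ι m k : Type*} [Fintype m] (s : Finset ι) (A : ι → Matrix k m ℂ)
    (v : m → ℂ) : (∑ i ∈ s, A i).mulVec v = ∑ i ∈ s, (A i).mulVec v := by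
  funext p
  simp only [Matrix.mulVec, dotProduct, Matrix.sum_apply, Finset.sum_mul,
    Finset.sum_apply]
  rw [Finset.sum_comm]

lemma dotProduct_sum' {ι m : Type*} [Fintype m] (s : Finset ι) (u : m → ℂ)
    (f : ι → m → ℂ) : u ⬝ᵥ (∑ i ∈ s, f i) = ∑ i ∈ s, u ⬝ᵥ f i := by
  simp only [dotProduct, Finset.sum_apply, Finset.mul_sum]
  rw [Finset.sum_comm]

lemma lambda_expect_zero (n : ℕ) (ψ : (Fin n → Fin 2) → ℂ)
    (hpar : (parityOp n).mulVec ψ = ψ ∨ (parityOp n).mulVec ψ = -ψ) :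
    star (fun p : (Fin n → Fin 2) × (Fin n → Fin 2) => ψ p.1 * ψ p.2)
      ⬝ᵥ (lambdaOp n).mulVec (fun p => ψ p.1 * ψ p.2) = 0 := by
  have hstar : star (fun p : (Fin n → Fin 2) × (Fin n → Fin 2) => ψ p.1 * ψ p.2)
      = fun p => star ψ p.1 * star ψ p.2 := by
    funext p; simp [star_mul']
  rw [lambdaOp, sum_mulVec', dotProduct_sum']
  rw [Finset.sum_congr rfl fun k (_ : k ∈ Finset.univ) => by
    rw [hstar, kron_mulVec_prod, dot_split]]
  rw [Finset.sum_congr rfl fun k (_ : k ∈ Finset.univ) => by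
    rw [expect_zero n ψ hpar k, mul_zero]]
  simp

lemma mul_vecMulVec' {m : Type*} [Fintype m] (A : Matrix m m ℂ) (u w : m → ℂ) :
    A * vecMulVec u w = vecMulVec (A.mulVec u) w := by
  ext i j
  simp only [Matrix.mul_apply, Matrix.vecMulVec_apply, Matrix.mulVec, dotProduct,
    Finset.sum_mul]
  exact Finset.sum_congr rfl fun c _ => by ring

lemma vecMulVec_mul' {m : Type*} [Fintype m] (A : Matrix m m ℂ) (u w : m → ℂ) :
    vecMulVec u w * A = vecMulVec u (Matrix.vecMul w A) := by
  ext i j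
  simp only [Matrix.mul_apply, Matrix.vecMulVec_apply, Matrix.vecMul, dotProduct,
    Finset.mul_sum]
  exact Finset.sum_congr rfl fun c _ => by ring

lemma vecMulVec_mulVec' {m : Type*} [Fintype m] (u w x : m → ℂ) :
    (vecMulVec u w).mulVec x = (w ⬝ᵥ x) • u := by
  funext i
  simp only [Matrix.mulVec, Matrix.vecMulVec_apply, dotProduct, Pi.smul_apply,
    smul_eq_mul, Finset.sum_mul, Finset.mul_sum]
  exact Finset.sum_congr rfl fun c _ => by ring

/-- A pure fermionic state (n-qubit state of definite parity) is Gaussian, i.e.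
`[Λ, (|Ψ⟩⟨Ψ|)^{⊗2}] = 0`, iff `Λ (|Ψ⟩ ⊗ |Ψ⟩) = 0`. -/
theorem stmt8 (n : ℕ) (ψ : (Fin n → Fin 2) → ℂ) (hψ : ψ ≠ 0)
    (hpar : (parityOp n).mulVec ψ = ψ ∨ (parityOp n).mulVec ψ = -ψ) :
    lambdaOp n * ((vecMulVec ψ (star ψ)) ⊗ₖ (vecMulVec ψ (star ψ)))
        = ((vecMulVec ψ (star ψ)) ⊗ₖ (vecMulVec ψ (star ψ))) * lambdaOp n
      ↔ (lambdaOp n).mulVec (fun p => ψ p.1 * ψ p.2) = 0 := by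
  set v : (Fin n → Fin 2) × (Fin n → Fin 2) → ℂ := fun p => ψ p.1 * ψ p.2 with hv
  have hrho : (vecMulVec ψ (star ψ)) ⊗ₖ (vecMulVec ψ (star ψ)) = vecMulVec v (star v) := by
    ext ⟨a, b⟩ ⟨c, d⟩
    simp only [Matrix.kroneckerMap_apply, Matrix.vecMulVec_apply, hv, Pi.star_apply, star_mul']
    ring
  rw [hrho]
  constructor
  · intro h
    have h2 := congrArg (fun M => M.mulVec v) h
    simp only [← Matrix.mulVec_mulVec] at h2
    rw [vecMulVec_mulVec'] at h2
    rw [Matrix.mulVec_smul] at h2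
    rw [vecMulVec_mulVec'] at h2
    rw [lambda_expect_zero n ψ hpar, zero_smul] at h2
    have hψd : star ψ ⬝ᵥ ψ ≠ 0 := fun h0 => hψ (by
      open scoped ComplexOrder in
      exact dotProduct_star_self_eq_zero.mp h0)
    have hvv : star v ⬝ᵥ v ≠ 0 := by
      have hsv : star v = fun p : (Fin n → Fin 2) × (Fin n → Fin 2) =>
          star ψ p.1 * star ψ p.2 := by
        funext p; simp [hv, star_mul']
      rw [hsv, hv, dot_split]
      exact mul_ne_zero hψd hψd
    exact (smul_eq_zero.mp h2).resolve_left hvv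
  · intro h
    rw [mul_vecMulVec', h, vecMulVec_mul']
    have : Matrix.vecMul (star v) (lambdaOp n) = star ((lambdaOp n).mulVec v) := by
      rw [← lambda_herm, ← Matrix.star_mulVec, lambda_herm]
    rw [this, h]
    ext i j
    simp [Matrix.vecMulVec_apply]
end

section
/- A pure 4-mode fermionic state |Ψ⟩ (a 4-qubit state of definite parity with respect to Z^{⊗4}) is Gaussian if and only if ⟨Ψ*| X⊗Y⊗X⊗Y |Ψ⟩ = 0, where |Ψ*⟩ denotes the componentwise complex conjugate of |Ψ⟩ in the computational basis. -/
open Matrix Kronecker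

/-! In the computational basis the `(p, q)` component of `Λ (ψ ⊗ ψ)` is `2` times a signed sum,
over the modes `j` in which `p` and `q` differ, of `ψ (p + e_j) ψ (q + e_j)`. For a state of
definite parity it vanishes unless `p` and `q` differ in an even number of modes; for exactly two
modes the two terms cancel because their Jordan-Wigner signs are opposite. With four modes only the
components at `q = p̄` survive, and each of them is a nonzero multiple of the single quadratic form
`⟨Ψ*| X⊗Y⊗X⊗Y |Ψ⟩`. -/

open scoped Finset

theorem pauliZ_apply_of_ne {a b : Fin 2} (h : b ≠ a) : pauliZ a b = 0 := by
  fin_cases a <;> fin_cases b <;> simp_all [pauliZ]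

theorem pauliX_apply_of_ne {a b : Fin 2} (h : b ≠ 1 - a) : pauliX a b = 0 := by
  fin_cases a <;> fin_cases b <;> simp_all [pauliX]

theorem pauliY_apply_of_ne {a b : Fin 2} (h : b ≠ 1 - a) : pauliY a b = 0 := by
  fin_cases a <;> fin_cases b <;> simp_all [pauliY]

theorem pauliZ_apply_self (a : Fin 2) : pauliZ a a = (-1) ^ (a : ℕ) := by
  fin_cases a <;> simp [pauliZ]

theorem pauliX_apply_flip (a : Fin 2) : pauliX a (1 - a) = 1 := by
  fin_cases a <;> simp [pauliX]

theorem pauliY_apply_flip_mul (a b : Fin 2) :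
    pauliY a (1 - a) * pauliY b (1 - b) = if a = b then -1 else 1 := by
  fin_cases a <;> fin_cases b <;> simp [pauliY]

theorem eq_one_sub_of_ne {a b : Fin 2} (h : a ≠ b) : b = 1 - a := by
  fin_cases a <;> fin_cases b <;> simp_all

theorem sum_fin_two_mul {n : ℕ} {M : Type*} [AddCommMonoid M] (f : Fin (2 * n) → M) :
    ∑ k, f k = ∑ j : Fin n, ∑ a : Fin 2, f ⟨2 * j + a, by omega⟩ := by
  rw [← (finProdFinEquiv.trans (finCongr (Nat.mul_comm n 2))).sum_comp, Fintype.sum_prod_type]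
  refine Finset.sum_congr rfl fun j _ => Finset.sum_congr rfl fun a _ => congrArg f ?_
  ext
  simp [add_comm]

theorem kroneckerMap_mul_mulVec_apply {m m' : Type*} [Fintype m'] (A B : Matrix m m' ℂ)
    (u v : m' → ℂ) (p q : m) :
    ((A ⊗ₖ B) *ᵥ fun r => u r.1 * v r.2) (p, q) = (A *ᵥ u) p * (B *ᵥ v) q := by
  simp only [mulVec, dotProduct, kroneckerMap_apply, Fintype.sum_prod_type, Finset.sum_mul_sum]
  exact Finset.sum_congr rfl fun _ _ => Finset.sum_congr rfl fun _ _ => by ring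

section Qubits

variable {n : ℕ}

def flipBit (j : Fin n) (x : Fin n → Fin 2) : Fin n → Fin 2 := Function.update x j (1 - x j)

def complBits (x : Fin n → Fin 2) : Fin n → Fin 2 := fun i => 1 - x i

def jordanWignerSign (j : Fin n) (x : Fin n → Fin 2) : ℂ := ∏ i ∈ Finset.Iio j, (-1) ^ (x i : ℕ)

def paritySign (x : Fin n → Fin 2) : ℂ := ∏ i, (-1) ^ (x i : ℕ)

def flipPairing (ψ : (Fin n → Fin 2) → ℂ) (p : Fin n → Fin 2) : ℂ :=
  ∑ j : Fin n, (-1) ^ (j : ℕ) * ψ (flipBit j p) * ψ (flipBit j (complBits p))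

theorem flipBit_apply (j : Fin n) (x : Fin n → Fin 2) (i : Fin n) :
    flipBit j x i = if i = j then 1 - x i else x i := by
  by_cases h : i = j <;> simp [flipBit, h]

theorem prod_neg_one_pow_mul_prod_neg_one_pow (s : Finset (Fin n)) (p q : Fin n → Fin 2) :
    (∏ i ∈ s, (-1 : ℂ) ^ (p i : ℕ)) * ∏ i ∈ s, (-1 : ℂ) ^ (q i : ℕ) =
      (-1) ^ #{i ∈ s | p i ≠ q i} := by
  have hsign : ∀ a b : Fin 2, (-1 : ℂ) ^ (a : ℕ) * (-1) ^ (b : ℕ) = if a ≠ b then -1 else 1 := by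
    intro a b
    fin_cases a <;> fin_cases b <;> simp
  rw [← Finset.prod_mul_distrib, Finset.prod_congr rfl fun i _ => hsign (p i) (q i),
    Finset.prod_ite, Finset.prod_const, Finset.prod_const_one, mul_one]

theorem jordanWignerSign_mul_jordanWignerSign (j : Fin n) (p q : Fin n → Fin 2) :
    jordanWignerSign j p * jordanWignerSign j q = (-1) ^ #{i ∈ Finset.Iio j | p i ≠ q i} :=
  prod_neg_one_pow_mul_prod_neg_one_pow _ p q

theorem paritySign_mul_paritySign (p q : Fin n → Fin 2) :
    paritySign p * paritySign q = (-1) ^ #{i | p i ≠ q i} :=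
  prod_neg_one_pow_mul_prod_neg_one_pow _ p q

theorem paritySign_ne_zero (x : Fin n → Fin 2) : paritySign x ≠ 0 :=
  Finset.prod_ne_zero_iff.mpr fun _ _ => pow_ne_zero _ (by norm_num)

theorem paritySign_flipBit (j : Fin n) (x : Fin n → Fin 2) :
    paritySign (flipBit j x) = -paritySign x := by
  have hflip : ∀ a : Fin 2, (-1 : ℂ) ^ ((1 - a : Fin 2) : ℕ) = -(-1) ^ (a : ℕ) := by
    intro a
    fin_cases a <;> simp
  simp only [paritySign]
  rw [← Finset.mul_prod_erase _ _ (Finset.mem_univ j),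
    ← Finset.mul_prod_erase _ (fun i => (-1 : ℂ) ^ (x i : ℕ)) (Finset.mem_univ j),
    Finset.prod_congr rfl fun i hi => by rw [flipBit_apply, if_neg (Finset.ne_of_mem_erase hi)],
    flipBit_apply, if_pos rfl, hflip, neg_mul]

theorem paritySign_flipBit_ne (j : Fin n) (x : Fin n → Fin 2) :
    paritySign (flipBit j x) ≠ paritySign x := by
  rw [paritySign_flipBit, Ne, CharZero.neg_eq_self_iff]
  exact paritySign_ne_zero x

theorem exists_paritySign_ne [NeZero n] (ε : ℂ) : ∃ p : Fin n → Fin 2, paritySign p ≠ ε := by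
  by_cases h : paritySign (0 : Fin n → Fin 2) = ε
  · exact ⟨flipBit 0 0, h ▸ paritySign_flipBit_ne 0 0⟩
  · exact ⟨0, h⟩

theorem tensorFactors_mulVec_apply (M : Fin n → Matrix (Fin 2) (Fin 2) ℂ)
    (τ : Fin n → Fin 2 → Fin 2) (hM : ∀ i a b, b ≠ τ i a → M i a b = 0)
    (ψ : (Fin n → Fin 2) → ℂ) (x : Fin n → Fin 2) :
    (tensorFactors n M *ᵥ ψ) x = (∏ i, M i (x i) (τ i (x i))) * ψ (fun i => τ i (x i)) := by
  refine Finset.sum_eq_single _ (fun y _ hy => ?_) (by simp)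
  obtain ⟨i, hi⟩ := Function.ne_iff.mp hy
  simp only [tensorFactors, of_apply]
  rw [Finset.prod_eq_zero (Finset.mem_univ i) (hM i _ _ hi), zero_mul]

theorem parityOp_mulVec_apply (ψ : (Fin n → Fin 2) → ℂ) (x : Fin n → Fin 2) :
    (parityOp n *ᵥ ψ) x = paritySign x * ψ x := by
  rw [parityOp, tensorFactors_mulVec_apply _ (fun _ a => a) fun _ _ _ h => pauliZ_apply_of_ne h]
  simp [paritySign, pauliZ_apply_self]

theorem apply_eq_zero_of_parityOp_mulVec_eq_smul {ψ : (Fin n → Fin 2) → ℂ} {ε : ℂ}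
    (h : parityOp n *ᵥ ψ = ε • ψ) {x : Fin n → Fin 2} (hx : paritySign x ≠ ε) : ψ x = 0 := by
  have hx' := congrFun h x
  rw [parityOp_mulVec_apply, Pi.smul_apply, smul_eq_mul] at hx'
  have : (paritySign x - ε) * ψ x = 0 := by linear_combination hx'
  exact (mul_eq_zero.mp this).resolve_left (sub_ne_zero.mpr hx)

theorem majorana_mulVec_apply (j : Fin n) (a : Fin 2) (ψ : (Fin n → Fin 2) → ℂ)
    (x : Fin n → Fin 2) :
    (majorana n ⟨2 * j + a, by omega⟩ *ᵥ ψ) x =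
      jordanWignerSign j x * ![pauliX, pauliY] a (x j) (1 - x j) * ψ (flipBit j x) := by
  have hdiv : (2 * (j : ℕ) + a) / 2 = j := by omega
  have hP : (if (2 * (j : ℕ) + a) % 2 = 0 then pauliX else pauliY) = ![pauliX, pauliY] a := by
    fin_cases a <;> simp [Nat.add_mod]
  simp only [majorana, hdiv, hP, ← Fin.lt_def, ← Fin.ext_iff]
  rw [tensorFactors_mulVec_apply _ (fun i b => if i = j then 1 - b else b)]
  · have hflip : (fun i => if i = j then 1 - x i else x i) = flipBit j x := by
      ext i
      rw [flipBit_apply]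
    have hfactor : ∀ i, (if i < j then pauliZ else if i = j then ![pauliX, pauliY] a else 1)
        (x i) (if i = j then 1 - x i else x i) =
        (if i ∈ Finset.Iio j then (-1) ^ (x i : ℕ) else 1) *
          (if j = i then ![pauliX, pauliY] a (x j) (1 - x j) else 1) := by
      intro i
      rcases lt_trichotomy i j with hij | rfl | hij
      · simp [hij, hij.ne, hij.ne', pauliZ_apply_self]
      · simp
      · simp only [hij.not_gt, hij.ne', hij.ne, if_false, Finset.mem_Iio, mul_one]
        exact one_apply_eq _
    rw [hflip, Finset.prod_congr rfl fun i _ => hfactor i, Finset.prod_mul_distrib,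
      Finset.prod_ite_mem, Finset.univ_inter, Finset.prod_ite_eq, if_pos (Finset.mem_univ _)]
    rfl
  · intro i b c hc
    rcases lt_trichotomy i j with hij | rfl | hij
    · simpa [hij, hij.ne] using pauliZ_apply_of_ne hc
    · fin_cases a
      · simpa using pauliX_apply_of_ne (by simpa using hc)
      · simpa using pauliY_apply_of_ne (by simpa using hc)
    · simp only [hij.ne', hij.not_gt, if_false] at hc ⊢
      exact one_apply_ne' hc

/-- The `X` and `Y` Majoranas of mode `j` add up when `p j ≠ q j` and cancel otherwise. -/
theorem lambdaOp_mulVec_apply (ψ : (Fin n → Fin 2) → ℂ) (p q : Fin n → Fin 2) :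
    (lambdaOp n *ᵥ fun r => ψ r.1 * ψ r.2) (p, q) =
      2 * ∑ j with p j ≠ q j,
        jordanWignerSign j p * jordanWignerSign j q * ψ (flipBit j p) * ψ (flipBit j q) := by
  have hpair : ∀ j : Fin n, ∑ a : Fin 2,
      (majorana n ⟨2 * j + a, by omega⟩ *ᵥ ψ) p * (majorana n ⟨2 * j + a, by omega⟩ *ᵥ ψ) q =
      if p j ≠ q j then
        2 * (jordanWignerSign j p * jordanWignerSign j q * ψ (flipBit j p) * ψ (flipBit j q))
      else 0 := by
    intro j
    simp only [majorana_mulVec_apply, Fin.sum_univ_two]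
    have hY := pauliY_apply_flip_mul (p j) (q j)
    simp only [Matrix.cons_val_zero, Matrix.cons_val_one, pauliX_apply_flip]
    by_cases h : p j = q j
    · rw [if_pos h] at hY
      rw [if_neg (not_not.mpr h)]
      linear_combination
        (jordanWignerSign j p * jordanWignerSign j q * ψ (flipBit j p) * ψ (flipBit j q)) * hY
    · rw [if_neg h] at hY
      rw [if_pos h]
      linear_combination
        (jordanWignerSign j p * jordanWignerSign j q * ψ (flipBit j p) * ψ (flipBit j q)) * hY
  rw [lambdaOp, sum_mulVec, Finset.sum_apply, sum_fin_two_mul, Finset.mul_sum, Finset.sum_filter]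
  simp only [kroneckerMap_mul_mulVec_apply, hpair]

theorem lambdaOp_mulVec_apply_eq_zero_of_paritySign_ne {ψ : (Fin n → Fin 2) → ℂ} {ε : ℂ}
    (hψ : ∀ x, paritySign x ≠ ε → ψ x = 0) {p q : Fin n → Fin 2}
    (hpq : paritySign p ≠ paritySign q) :
    (lambdaOp n *ᵥ fun r => ψ r.1 * ψ r.2) (p, q) = 0 := by
  rw [lambdaOp_mulVec_apply, Finset.sum_eq_zero, mul_zero]
  intro j _
  by_cases hp : paritySign (flipBit j p) = ε
  · have hq : paritySign (flipBit j q) ≠ ε := by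
      rw [paritySign_flipBit] at hp ⊢
      exact fun hq => hpq (neg_injective (hp.trans hq.symm))
    simp [hψ _ hq]
  · simp [hψ _ hp]

theorem flipBit_eq_flipBit_of_ne_iff {p q : Fin n → Fin 2} {j₁ j₂ : Fin n} (hne : j₁ ≠ j₂)
    (hD : ∀ i, p i ≠ q i ↔ i = j₁ ∨ i = j₂) : flipBit j₁ p = flipBit j₂ q := by
  funext i
  rw [flipBit_apply, flipBit_apply]
  rcases eq_or_ne i j₁ with rfl | h₁
  · rw [if_pos rfl, if_neg hne]
    exact (eq_one_sub_of_ne ((hD i).mpr (Or.inl rfl))).symm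
  rcases eq_or_ne i j₂ with rfl | h₂
  · rw [if_neg h₁, if_pos rfl]
    exact eq_one_sub_of_ne (Ne.symm ((hD i).mpr (Or.inr rfl)))
  · rw [if_neg h₁, if_neg h₂]
    exact not_not.mp fun h => ((hD i).mp h).elim h₁ h₂

/-- Two differing modes `j₁ < j₂` contribute the same product of amplitudes, with Jordan-Wigner
signs of opposite sign. -/
theorem lambdaOp_mulVec_apply_eq_zero_of_card_eq_two (ψ : (Fin n → Fin 2) → ℂ)
    {p q : Fin n → Fin 2} (hpq : #{j | p j ≠ q j} = 2) :
    (lambdaOp n *ᵥ fun r => ψ r.1 * ψ r.2) (p, q) = 0 := by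
  obtain ⟨j₁, j₂, hne, hD⟩ := Finset.card_eq_two.mp hpq
  wlog hlt : j₁ < j₂ generalizing j₁ j₂
  · exact this j₂ j₁ hne.symm (by rw [hD, Finset.pair_comm])
      (lt_of_le_of_ne (not_lt.mp hlt) hne.symm)
  have hmem : ∀ i, p i ≠ q i ↔ i = j₁ ∨ i = j₂ := fun i => by
    simpa using Finset.ext_iff.mp hD i
  have hs₁ : jordanWignerSign j₁ p * jordanWignerSign j₁ q = 1 := by
    rw [jordanWignerSign_mul_jordanWignerSign, Finset.card_eq_zero.mpr, pow_zero]
    refine Finset.filter_eq_empty_iff.mpr fun i hi h => ?_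
    rw [Finset.mem_Iio] at hi
    rcases (hmem i).mp h with rfl | rfl
    exacts [lt_irrefl _ hi, lt_asymm hi hlt]
  have hs₂ : jordanWignerSign j₂ p * jordanWignerSign j₂ q = -1 := by
    rw [jordanWignerSign_mul_jordanWignerSign, Finset.card_eq_one.mpr ⟨j₁, ?_⟩, pow_one]
    ext i
    simp only [Finset.mem_filter, Finset.mem_Iio, Finset.mem_singleton, hmem]
    constructor
    · rintro ⟨hi, rfl | rfl⟩
      exacts [rfl, (lt_irrefl _ hi).elim]
    · rintro rfl
      exact ⟨hlt, Or.inl rfl⟩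
  rw [lambdaOp_mulVec_apply, hD, Finset.sum_pair hne, hs₁, hs₂,
    flipBit_eq_flipBit_of_ne_iff hne hmem,
    flipBit_eq_flipBit_of_ne_iff hne.symm fun i => (hmem i).trans or_comm]
  ring

theorem lambdaOp_mulVec_apply_complBits (ψ : (Fin n → Fin 2) → ℂ) (p : Fin n → Fin 2) :
    (lambdaOp n *ᵥ fun r => ψ r.1 * ψ r.2) (p, complBits p) = 2 * flipPairing ψ p := by
  have hne : ∀ j, p j ≠ complBits p j := fun j => by
    simp only [complBits]
    generalize p j = a
    fin_cases a <;> decide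
  rw [lambdaOp_mulVec_apply, flipPairing, Finset.filter_true_of_mem fun j _ => hne j]
  refine congrArg _ (Finset.sum_congr rfl fun j _ => ?_)
  rw [jordanWignerSign_mul_jordanWignerSign, Finset.filter_true_of_mem fun i _ => hne i,
    Fin.card_Iio]

theorem flipPairing_eq_zero_of_paritySign_eq {ψ : (Fin n → Fin 2) → ℂ} {ε : ℂ}
    (hψ : ∀ x, paritySign x ≠ ε → ψ x = 0) {p : Fin n → Fin 2} (hp : paritySign p = ε) :
    flipPairing ψ p = 0 :=
  Finset.sum_eq_zero fun j _ => by
    rw [hψ (flipBit j p) (hp ▸ paritySign_flipBit_ne j p), mul_zero, zero_mul]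

end Qubits

theorem lambdaOp_four_mulVec_eq_zero_iff {ψ : (Fin 4 → Fin 2) → ℂ} {ε : ℂ}
    (hψ : ∀ x, paritySign x ≠ ε → ψ x = 0) :
    (lambdaOp 4 *ᵥ fun r => ψ r.1 * ψ r.2) = 0 ↔ ∀ p, flipPairing ψ p = 0 := by
  constructor
  · intro h p
    have hp := congrFun h (p, complBits p)
    rw [lambdaOp_mulVec_apply_complBits, Pi.zero_apply] at hp
    exact (mul_eq_zero.mp hp).resolve_left two_ne_zero
  intro h
  funext ⟨p, q⟩
  rw [Pi.zero_apply]
  by_cases hpq : paritySign p = paritySign q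
  swap
  · exact lambdaOp_mulVec_apply_eq_zero_of_paritySign_ne hψ hpq
  have heven : Even #{j | p j ≠ q j} := by
    rw [← neg_one_pow_eq_one_iff_even (R := ℂ) (by norm_num), ← paritySign_mul_paritySign, ← hpq,
      paritySign_mul_paritySign]
    simp
  have hle : #{j | p j ≠ q j} ≤ 4 := (Finset.card_filter_le _ _).trans (by simp)
  obtain hD | hD | hD : #{j | p j ≠ q j} = 0 ∨ #{j | p j ≠ q j} = 2 ∨ #{j | p j ≠ q j} = 4 := by
    obtain ⟨k, hk⟩ := heven
    omega
  · rw [lambdaOp_mulVec_apply, Finset.card_eq_zero.mp hD, Finset.sum_empty, mul_zero]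
  · exact lambdaOp_mulVec_apply_eq_zero_of_card_eq_two ψ hD
  · have hq : q = complBits p := by
      have hall := Finset.filter_eq_self.mp (Finset.eq_univ_of_card _ hD)
      funext j
      exact eq_one_sub_of_ne (hall j (Finset.mem_univ j))
    rw [hq, lambdaOp_mulVec_apply_complBits, h, mul_zero]

noncomputable def xyxyPhase (x : Fin 4 → Fin 2) : ℂ :=
  ∏ i, ![pauliX, pauliY, pauliX, pauliY] i (x i) (1 - x i)

theorem xyxyPhase_ne_zero (x : Fin 4 → Fin 2) : xyxyPhase x ≠ 0 := by
  refine Finset.prod_ne_zero_iff.mpr fun i _ => ?_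
  generalize x i = a
  fin_cases i <;> fin_cases a <;> simp [pauliX, pauliY]

theorem sum_sum_xyxy_eq_sum_xyxyPhase (ψ : (Fin 4 → Fin 2) → ℂ) :
    ∑ j, ∑ k, ψ j * tensorFactors 4 ![pauliX, pauliY, pauliX, pauliY] j k * ψ k =
      ∑ x, xyxyPhase x * ψ x * ψ (complBits x) := by
  have hM : ∀ i a b, b ≠ 1 - a → ![pauliX, pauliY, pauliX, pauliY] i a b = 0 := by
    intro i a b h
    fin_cases i
    exacts [pauliX_apply_of_ne h, pauliY_apply_of_ne h, pauliX_apply_of_ne h, pauliY_apply_of_ne h]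
  refine Finset.sum_congr rfl fun x _ => ?_
  have hx := tensorFactors_mulVec_apply _ (fun _ a => 1 - a) hM ψ x
  simp only [mulVec, dotProduct] at hx
  simp only [mul_assoc, ← Finset.mul_sum, hx]
  exact mul_left_comm _ _ _

theorem sum_fin_four_pi (f : (Fin 4 → Fin 2) → ℂ) :
    ∑ x, f x = ∑ a, ∑ b, ∑ c, ∑ d, f ![a, b, c, d] := by
  let e : Fin 2 × Fin 2 × Fin 2 × Fin 2 ≃ (Fin 4 → Fin 2) :=
    { toFun := fun t => ![t.1, t.2.1, t.2.2.1, t.2.2.2]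
      invFun := fun x => (x 0, x 1, x 2, x 3)
      left_inv := fun _ => rfl
      right_inv := fun x => by ext i; fin_cases i <;> rfl }
  simp only [← e.sum_comp, Fintype.sum_prod_type]
  rfl

/-- The strings of parity opposite to `p` are the `flipBit j p` and their complements, and
`xyxyPhase` changes sign exactly under flips of the odd-numbered modes. -/
theorem two_mul_flipPairing (ψ : (Fin 4 → Fin 2) → ℂ) (p : Fin 4 → Fin 2) :
    2 * flipPairing ψ p = xyxyPhase p *
      ∑ x, if paritySign x ≠ paritySign p then xyxyPhase x * ψ x * ψ (complBits x) else 0 := by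
  obtain ⟨a, b, c, d, rfl⟩ : ∃ a b c d, p = ![a, b, c, d] :=
    ⟨p 0, p 1, p 2, p 3, by ext i; fin_cases i <;> rfl⟩
  set φ : Fin 2 → Fin 2 → Fin 2 → Fin 2 → ℂ := fun a b c d => ψ ![a, b, c, d]
  have hφ : ∀ x, ψ x = φ (x 0) (x 1) (x 2) (x 3) := fun x =>
    congrArg ψ (by ext i; fin_cases i <;> rfl)
  simp only [flipPairing, sum_fin_four_pi, Fin.sum_univ_four, Fin.sum_univ_two, hφ, flipBit_apply,
    complBits, paritySign, xyxyPhase, Fin.prod_univ_four]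
  simp +decide only [Matrix.cons_val, Fin.isValue, ite_true, ite_false, pauliX_apply_flip]
  have hY0 : pauliY 0 1 = -Complex.I := rfl
  have hY1 : pauliY 1 0 = Complex.I := rfl
  have h1 : (-1 : ℂ) ≠ 1 := by norm_num
  simp only [Fin.val_zero, Fin.val_one, Fin.val_two, pow_zero, pow_one, sub_zero, sub_self,
    sub_sub_cancel, one_mul, mul_one, hY0, hY1]
  fin_cases a <;> fin_cases b <;> fin_cases c <;> fin_cases d <;>
    simp [h1, h1.symm, pauliY] <;> ring_nf

theorem two_mul_flipPairing_of_paritySign_ne {ψ : (Fin 4 → Fin 2) → ℂ} {ε : ℂ}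
    (hψ : ∀ x, paritySign x ≠ ε → ψ x = 0) {p : Fin 4 → Fin 2} (hp : paritySign p ≠ ε) :
    2 * flipPairing ψ p = xyxyPhase p * ∑ x, xyxyPhase x * ψ x * ψ (complBits x) := by
  rw [two_mul_flipPairing]
  refine congrArg _ (Finset.sum_congr rfl fun x _ => ?_)
  split_ifs with hx
  · rfl
  · rw [hψ x (not_not.mp hx ▸ hp), mul_zero, zero_mul]

/-- A pure 4-mode fermionic state (definite parity 4-qubit state) is Gaussian iff
`⟨Ψ*| X⊗Y⊗X⊗Y |Ψ⟩ = 0` (the bilinear form). -/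
theorem stmt11 (ψ : (Fin 4 → Fin 2) → ℂ)
    (hpar : (parityOp 4).mulVec ψ = ψ ∨ (parityOp 4).mulVec ψ = -ψ) :
    (lambdaOp 4).mulVec (fun p => ψ p.1 * ψ p.2) = 0 ↔
      ∑ j, ∑ k, ψ j * (tensorFactors 4 ![pauliX, pauliY, pauliX, pauliY]) j k * ψ k = 0 := by
  obtain ⟨ε, hψ⟩ : ∃ ε : ℂ, ∀ x, paritySign x ≠ ε → ψ x = 0 := by
    rcases hpar with h | h
    · exact ⟨1, fun x => apply_eq_zero_of_parityOp_mulVec_eq_smul (h.trans (one_smul ℂ ψ).symm)⟩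
    · exact ⟨-1, fun x =>
        apply_eq_zero_of_parityOp_mulVec_eq_smul (h.trans (neg_one_smul ℂ ψ).symm)⟩
  rw [lambdaOp_four_mulVec_eq_zero_iff hψ, sum_sum_xyxy_eq_sum_xyxyPhase]
  constructor
  · intro h
    obtain ⟨p, hp⟩ := exists_paritySign_ne (n := 4) ε
    have hB := two_mul_flipPairing_of_paritySign_ne hψ hp
    rw [h, mul_zero] at hB
    exact (mul_eq_zero.mp hB.symm).resolve_left (xyxyPhase_ne_zero p)
  · intro hB p
    by_cases hp : paritySign p = ε
    · exact flipPairing_eq_zero_of_paritySign_eq hψ hp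
    · have h2 := two_mul_flipPairing_of_paritySign_ne hψ hp
      rw [hB, mul_zero] at h2
      exact (mul_eq_zero.mp h2).resolve_left two_ne_zero
end
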